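/- Let p, q, r be positive integers, n = p + q + r, and let a, b, c ∈ ℝ² be vectors satisfying p·a + q·b + r·c = 0 with ‖a‖ = 1/(4n) + 1/(4p), ‖b‖ = 1/(4n) + 1/(4q), ‖c‖ = 1/(4n) + 1/(4r). Then ‖a‖ + ‖b‖ − ‖a + b‖ = ‖a‖ + ‖c‖ − ‖a + c‖ = ‖b‖ + ‖c‖ − ‖b + c‖ = 1/n. -/

import Mathlib

/-!
Expanding `‖p • a + q • b‖² = ‖r • c‖²` expresses `⟪a, b⟫` through the three norms. With the
prescribed norms this turns `‖a + b‖²` into the perfect square `(‖a‖ + ‖b‖ - 1/n)²`, whose base is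
nonnegative. The hypotheses are symmetric in the three pairs `(p, a), (q, b), (r, c)`, so the other
two defects follow by permuting them.
-/

open RealInnerProductSpace

section WeightedTriangle

variable {E : Type*} [NormedAddCommGroup E] [InnerProductSpace ℝ E]

theorem two_mul_inner_of_smul_add_smul_add_smul_eq_zero {p q r : ℝ} {a b c : E}
    (hsum : p • a + q • b + r • c = 0) :
    2 * (p * q * ⟪a, b⟫) = r ^ 2 * ‖c‖ ^ 2 - p ^ 2 * ‖a‖ ^ 2 - q ^ 2 * ‖b‖ ^ 2 := by
  have hnorm : ‖p • a + q • b‖ ^ 2 = ‖r • c‖ ^ 2 := by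
    rw [eq_neg_of_add_eq_zero_left hsum, norm_neg]
  rw [norm_add_sq_real, norm_smul, norm_smul, norm_smul, real_inner_smul_left,
    real_inner_smul_right, Real.norm_eq_abs, Real.norm_eq_abs, Real.norm_eq_abs, mul_pow,
    mul_pow, mul_pow, sq_abs, sq_abs, sq_abs] at hnorm
  linear_combination hnorm

theorem norm_add_eq_of_smul_add_smul_add_smul_eq_zero {p q r n : ℝ} (hp : 0 < p) (hq : 0 < q)
    (hr : 0 < r) (hn : n = p + q + r) {a b c : E} (hsum : p • a + q • b + r • c = 0)
    (ha : ‖a‖ = 1 / (4 * n) + 1 / (4 * p)) (hb : ‖b‖ = 1 / (4 * n) + 1 / (4 * q))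
    (hc : ‖c‖ = 1 / (4 * n) + 1 / (4 * r)) :
    ‖a‖ + ‖b‖ - ‖a + b‖ = 1 / n := by
  have hn_pos : 0 < n := by linarith
  have hinner : ⟪a, b⟫ = (r ^ 2 * ‖c‖ ^ 2 - p ^ 2 * ‖a‖ ^ 2 - q ^ 2 * ‖b‖ ^ 2) / (2 * p * q) := by
    rw [eq_div_iff (by positivity)]
    linear_combination two_mul_inner_of_smul_add_smul_add_smul_eq_zero hsum
  have hsq : ‖a + b‖ ^ 2 = (‖a‖ + ‖b‖ - 1 / n) ^ 2 := by
    rw [norm_add_sq_real, hinner, ha, hb, hc, hn]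
    field_simp
    ring
  have hbase : 0 ≤ ‖a‖ + ‖b‖ - 1 / n := by
    have hpn : 1 / n ≤ 1 / p := one_div_le_one_div_of_le hp (by linarith)
    have hqn : 1 / n ≤ 1 / q := one_div_le_one_div_of_le hq (by linarith)
    have hsplit : ‖a‖ + ‖b‖ - 1 / n = (1 / p - 1 / n) / 4 + (1 / q - 1 / n) / 4 := by
      rw [ha, hb]; field_simp; ring
    linarith
  rw [(pow_left_inj₀ (norm_nonneg _) hbase two_ne_zero).1 hsq]
  ring

end WeightedTriangle

theorem extremal_triangle_defects (p q r n : ℕ) (hp : 0 < p) (hq : 0 < q) (hr : 0 < r)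
    (hn : n = p + q + r) (a b c : EuclideanSpace ℝ (Fin 2))
    (hsum : (p : ℝ) • a + (q : ℝ) • b + (r : ℝ) • c = 0)
    (ha : ‖a‖ = 1 / (4 * n) + 1 / (4 * p))
    (hb : ‖b‖ = 1 / (4 * n) + 1 / (4 * q))
    (hc : ‖c‖ = 1 / (4 * n) + 1 / (4 * r)) :
    ‖a‖ + ‖b‖ - ‖a + b‖ = 1 / n ∧
    ‖a‖ + ‖c‖ - ‖a + c‖ = 1 / n ∧
    ‖b‖ + ‖c‖ - ‖b + c‖ = 1 / n := by
  have hp' : (0 : ℝ) < p := Nat.cast_pos.2 hp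
  have hq' : (0 : ℝ) < q := Nat.cast_pos.2 hq
  have hr' : (0 : ℝ) < r := Nat.cast_pos.2 hr
  have hn' : (n : ℝ) = p + q + r := by rw [hn]; push_cast; ring
  refine ⟨?_, ?_, ?_⟩
  · exact norm_add_eq_of_smul_add_smul_add_smul_eq_zero hp' hq' hr' hn' hsum ha hb hc
  · exact norm_add_eq_of_smul_add_smul_add_smul_eq_zero hp' hr' hq' (by rw [hn']; ring)
      (by rw [← hsum]; abel) ha hc hb
  · exact norm_add_eq_of_smul_add_smul_add_smul_eq_zero hq' hr' hp' (by rw [hn']; ring)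
      (by rw [← hsum]; abel) hb hc ha
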